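/- Let A⁺, A⁻ : ℝ → ℝ and u⁺, u⁻, û, c ∈ ℝ. Assume the Rankine–Hugoniot condition A⁺(u⁺) = A⁻(u⁻) and that the Kruzkov entropy inequality holds at c. Then: (iii) if u⁺ ≤ û < c < u⁻, then A⁻(c) ≤ A⁻(u⁻); (iv) if u⁺ < c < û ≤ u⁻, then A⁺(c) ≤ A⁺(u⁺). -/

import Mathlib

/-!
In either configuration the order of `u⁺, u⁻, û, c` fixes every sign and indicator in the
Kruzkov inequality, which then becomes a linear relation between `A^±(c)` and `A^±(u^±)`;
the Rankine–Hugoniot condition `A⁺(u⁺) = A⁻(u⁻)` turns it into the claimed bound.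
-/

open MeasureTheory Filter Set

/-- The Kruzkov entropy inequality at `c` for data `(um, up, uh)`:
`A⁺(u⁺)·sign(u⁺−c) − 2·sign(u⁺−û)·A⁺(c)·𝟙_{(û,u⁺)}(c) ≤
 A⁻(u⁻)·sign(u⁻−c) − 2·sign(u⁻−û)·A⁻(c)·𝟙_{(û,u⁻)}(c)`. -/
def KruzkovIneq (Ap Am : ℝ → ℝ) (um up uh c : ℝ) : Prop :=
  Ap up * Real.sign (up - c) -
      2 * Real.sign (up - uh) * Ap c * Set.indicator (Set.uIoo uh up) (1 : ℝ → ℝ) c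
    ≤ Am um * Real.sign (um - c) -
      2 * Real.sign (um - uh) * Am c * Set.indicator (Set.uIoo uh um) (1 : ℝ → ℝ) c

noncomputable def kruzkovFlux (A : ℝ → ℝ) (u uh c : ℝ) : ℝ :=
  A u * Real.sign (u - c) - 2 * Real.sign (u - uh) * A c * Set.indicator (Set.uIoo uh u) 1 c

lemma kruzkovIneq_iff_kruzkovFlux_le (Ap Am : ℝ → ℝ) (um up uh c : ℝ) :
    KruzkovIneq Ap Am um up uh c ↔ kruzkovFlux Ap up uh c ≤ kruzkovFlux Am um uh c :=
  Iff.rfl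

section kruzkovFlux

variable (A : ℝ → ℝ) {u uh c : ℝ}

lemma kruzkovFlux_of_lt_of_le (hu : u < c) (huh : uh ≤ c) : kruzkovFlux A u uh c = -A u := by
  have hc : c ∉ uIoo uh u := fun h => (lt_max_iff.mp h.2).elim huh.not_gt hu.not_gt
  simp [kruzkovFlux, indicator_of_notMem hc, Real.sign_of_neg (sub_neg.mpr hu)]

lemma kruzkovFlux_of_lt_of_lt (hu : u < c) (huh : c < uh) :
    kruzkovFlux A u uh c = 2 * A c - A u := by
  have hc : c ∈ uIoo uh u := mem_uIoo_of_gt hu huh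
  rw [kruzkovFlux, indicator_of_mem hc, Real.sign_of_neg (sub_neg.mpr hu),
    Real.sign_of_neg (sub_neg.mpr (hu.trans huh)), Pi.one_apply]
  ring

lemma kruzkovFlux_of_gt_of_lt (huh : uh < c) (hu : c < u) :
    kruzkovFlux A u uh c = A u - 2 * A c := by
  have hc : c ∈ uIoo uh u := mem_uIoo_of_lt huh hu
  simp [kruzkovFlux, indicator_of_mem hc, Real.sign_of_pos (sub_pos.mpr hu),
    Real.sign_of_pos (sub_pos.mpr (huh.trans hu))]

lemma kruzkovFlux_of_gt_of_ge (huh : c ≤ uh) (hu : c < u) : kruzkovFlux A u uh c = A u := by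
  have hc : c ∉ uIoo uh u := fun h => (min_lt_iff.mp h.1).elim huh.not_gt hu.not_gt
  simp [kruzkovFlux, indicator_of_notMem hc, Real.sign_of_pos (sub_pos.mpr hu)]

end kruzkovFlux

theorem stmt_10 (Ap Am : ℝ → ℝ) (up um uh c : ℝ)
    (hRH : Ap up = Am um)
    (hkruz : KruzkovIneq Ap Am um up uh c) :
    (up ≤ uh → uh < c → c < um → Am c ≤ Am um) ∧
    (up < c → c < uh → uh ≤ um → Ap c ≤ Ap up) := by
  rw [kruzkovIneq_iff_kruzkovFlux_le] at hkruz
  constructor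
  · intro hup huh hum
    rw [kruzkovFlux_of_lt_of_le Ap (hup.trans_lt huh) huh.le,
      kruzkovFlux_of_gt_of_lt Am huh hum] at hkruz
    linarith
  · intro hup huh hum
    rw [kruzkovFlux_of_lt_of_lt Ap hup huh,
      kruzkovFlux_of_gt_of_ge Am huh.le (huh.trans_le hum)] at hkruz
    linarith
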